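/- In the single-sequence energy-harvesting problem, any throughput-maximizing feasible power sequence P* has the property that whenever the power changes between consecutive epochs, the energy causality constraint is active at the change instant: for every i with 1 ≤ i ≤ K, if P*ⁱ ≠ P*^{i+1} then Σ_{j=1}^i P*ʲ lʲ = Σ_{j=0}^{i−1} Eʲ, i.e., all energy harvested before epoch i+1 has been completely consumed by time tⁱ. -/

import Mathlib

/-- `g(x) = (1/2) log(1 + K₀ x)` (natural logarithm). -/
noncomputable def gfun (K0 x : ℝ) : ℝ := Real.log (1 + K0 * x) / 2

/-- Feasibility in the single-sequence energy-harvesting problem. -/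
def SFeas (K : ℕ) (t E P : ℕ → ℝ) : Prop :=
  (∀ i, 1 ≤ i → i ≤ K + 1 → 0 ≤ P i) ∧
  (∀ k, 1 ≤ k → k ≤ K + 1 →
    ∑ i ∈ Finset.Icc 1 k, P i * (t i - t (i - 1)) ≤ ∑ j ∈ Finset.range k, E j)

/-- The throughput `Σ_{i=1}^{K+1} lⁱ g(Pⁱ)`. -/
noncomputable def SThroughput (K0 : ℝ) (K : ℕ) (t P : ℕ → ℝ) : ℝ :=
  ∑ i ∈ Finset.Icc 1 (K + 1), (t i - t (i - 1)) * gfun K0 (P i)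

/-!
If the causality constraint at `tⁱ` were slack while `Pⁱ ≠ Pⁱ⁺¹`, move both powers a fraction
`θ` of the way toward their length-weighted mean. This leaves the energy consumed by `tⁱ⁺¹` (and
at every other instant) unchanged and alters the energy consumed by `tⁱ` only by `θ` times a
constant, so the new policy is feasible for small `θ > 0`; by strict concavity of `g` its
throughput is strictly larger, contradicting optimality.
-/

open Finset

theorem strictConcaveOn_gfun {K0 : ℝ} (hK0 : 0 < K0) :
    StrictConcaveOn ℝ (Set.Ici 0) (gfun K0) := by
  refine ⟨convex_Ici 0, fun x hx y hy hxy a b ha hb hab => ?_⟩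
  have hx' : (0 : ℝ) ≤ x := hx
  have hy' : (0 : ℝ) ≤ y := hy
  have hne : 1 + K0 * x ≠ 1 + K0 * y := fun h =>
    hxy (mul_left_cancel₀ hK0.ne' (add_left_cancel h))
  have hlog := strictConcaveOn_log_Ioi.2 (show 0 < 1 + K0 * x by positivity)
    (show 0 < 1 + K0 * y by positivity) hne ha hb hab
  have hcomb : a • (1 + K0 * x) + b • (1 + K0 * y) = 1 + K0 * (a • x + b • y) := by
    simp only [smul_eq_mul]
    linear_combination hab
  rw [hcomb] at hlog
  simp only [gfun, smul_eq_mul] at hlog ⊢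
  linarith

theorem StrictConcaveOn.add_lt_add_toward_weighted_mean {s : Set ℝ} {f : ℝ → ℝ}
    (hf : StrictConcaveOn ℝ s f) {x y α β θ : ℝ} (hx : x ∈ s) (hy : y ∈ s) (hxy : x ≠ y)
    (hα : 0 < α) (hβ : 0 < β) (hθ₀ : 0 < θ) (hθ₁ : θ ≤ 1) :
    α * f x + β * f y <
      α * f ((1 - θ) * x + θ * ((α * x + β * y) / (α + β))) +
        β * f ((1 - θ) * y + θ * ((α * x + β * y) / (α + β))) := by
  set m := (α * x + β * y) / (α + β)
  have hαβ : 0 < α + β := add_pos hα hβ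
  have hweights : α / (α + β) + β / (α + β) = 1 := by field_simp
  have hm : (α / (α + β)) • x + (β / (α + β)) • y = m := by
    simp only [smul_eq_mul, m]
    field_simp
  have hms : m ∈ s := hm ▸ hf.1 hx hy (by positivity) (by positivity) hweights
  have hmean : α * f x + β * f y < (α + β) * f m := by
    have h := mul_lt_mul_of_pos_left (hm ▸ hf.2 hx hy hxy (by positivity) (by positivity)
      hweights) hαβ
    simp only [smul_eq_mul] at h
    field_simp at h
    linarith
  have hcx : (1 - θ) • f x + θ • f m ≤ f ((1 - θ) • x + θ • m) :=
    hf.concaveOn.2 hx hms (by linarith) hθ₀.le (by ring)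
  have hcy : (1 - θ) • f y + θ • f m ≤ f ((1 - θ) • y + θ • m) :=
    hf.concaveOn.2 hy hms (by linarith) hθ₀.le (by ring)
  simp only [smul_eq_mul] at hcx hcy
  linarith [mul_le_mul_of_nonneg_left hcx hα.le, mul_le_mul_of_nonneg_left hcy hβ.le,
    mul_lt_mul_of_pos_left hmean hθ₀]

theorem sum_Icc_one_of_support_pair {M : Type*} [AddCommGroup M] {d : ℕ → M} {i : ℕ}
    (hi : 1 ≤ i) (hd : ∀ j, j ≠ i → j ≠ i + 1 → d j = 0) (hsum : d i + d (i + 1) = 0)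
    (k : ℕ) : ∑ j ∈ Icc 1 k, d j = if k = i then d i else 0 := by
  induction k with
  | zero => simp [show 0 ≠ i by omega]
  | succ k ih =>
    rw [sum_Icc_succ_top (by omega), ih]
    by_cases hk : k = i
    · subst hk
      simp [hsum]
    by_cases hk' : k + 1 = i
    · subst hk'
      simp
    · simp [hk, hk', hd (k + 1) hk' (by omega)]

theorem exists_pos_le_one_mul_le (c : ℝ) {s : ℝ} (hs : 0 < s) :
    ∃ θ : ℝ, 0 < θ ∧ θ ≤ 1 ∧ θ * c ≤ s := by
  rcases le_or_gt c s with hc | hc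
  · exact ⟨1, one_pos, le_rfl, by simpa using hc⟩
  · have hc₀ : 0 < c := hs.trans hc
    exact ⟨s / c, div_pos hs hc₀, (div_le_one hc₀).2 hc.le, (div_mul_cancel₀ s hc₀.ne').le⟩

noncomputable def epochMean (t P : ℕ → ℝ) (i : ℕ) : ℝ :=
  ((t i - t (i - 1)) * P i + (t (i + 1) - t i) * P (i + 1)) /
    ((t i - t (i - 1)) + (t (i + 1) - t i))

noncomputable def pullTowardMean (t P : ℕ → ℝ) (i : ℕ) (θ : ℝ) (j : ℕ) : ℝ :=
  if j = i ∨ j = i + 1 then (1 - θ) * P j + θ * epochMean t P i else P j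

section pullTowardMean

variable {K : ℕ} {t E P : ℕ → ℝ} {i : ℕ} {θ : ℝ}

theorem sum_pullTowardMean_mul (hi : 1 ≤ i) (hl : (t i - t (i - 1)) + (t (i + 1) - t i) ≠ 0)
    (k : ℕ) :
    ∑ j ∈ Icc 1 k, pullTowardMean t P i θ j * (t j - t (j - 1)) =
      ∑ j ∈ Icc 1 k, P j * (t j - t (j - 1)) +
        if k = i then θ * (epochMean t P i - P i) * (t i - t (i - 1)) else 0 := by
  have h := sum_Icc_one_of_support_pair
    (d := fun j => pullTowardMean t P i θ j * (t j - t (j - 1)) - P j * (t j - t (j - 1))) hi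
    (fun j hji hji' => by simp [pullTowardMean, hji, hji'])
    (by simp only [pullTowardMean, epochMean, true_or, or_true, if_true,
          add_tsub_cancel_right]
        field_simp
        ring) k
  rw [sum_sub_distrib, sub_eq_iff_eq_add'] at h
  rw [h]
  split_ifs with hk
  · simp only [pullTowardMean, true_or, if_true]
    ring
  · rfl

theorem SFeas.pullTowardMean (hP : SFeas K t E P) (hi₁ : 1 ≤ i) (hiK : i ≤ K)
    (hα : t (i - 1) < t i) (hβ : t i < t (i + 1)) (hθ₀ : 0 ≤ θ) (hθ₁ : θ ≤ 1)
    (hslack : ∑ j ∈ Icc 1 i, P j * (t j - t (j - 1)) +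
        θ * (epochMean t P i - P i) * (t i - t (i - 1)) ≤ ∑ j ∈ range i, E j) :
    SFeas K t E (pullTowardMean t P i θ) := by
  refine ⟨fun j hj₁ hjK => ?_, fun k hk₁ hkK => ?_⟩
  · unfold _root_.pullTowardMean
    split_ifs with hj
    · have hmean : 0 ≤ epochMean t P i := by
        unfold epochMean
        have := hP.1 i hi₁ (by omega)
        have := hP.1 (i + 1) (by omega) (by omega)
        have := sub_pos.2 hα
        have := sub_pos.2 hβ
        positivity
      have := hP.1 j hj₁ hjK
      have := sub_nonneg.2 hθ₁
      positivity
    · exact hP.1 j hj₁ hjK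
  · rw [sum_pullTowardMean_mul hi₁ (by linarith)]
    split_ifs with hk
    · subst hk
      exact hslack
    · simpa using hP.2 k hk₁ hkK

theorem SThroughput_lt_pullTowardMean {K0 : ℝ} (hK0 : 0 < K0) (hi₁ : 1 ≤ i) (hiK : i ≤ K)
    (hα : t (i - 1) < t i) (hβ : t i < t (i + 1)) (hPi : 0 ≤ P i) (hPi' : 0 ≤ P (i + 1))
    (hne : P i ≠ P (i + 1)) (hθ₀ : 0 < θ) (hθ₁ : θ ≤ 1) :
    SThroughput K0 K t P < SThroughput K0 K t (pullTowardMean t P i θ) := by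
  rw [← sub_pos, SThroughput, SThroughput, ← sum_sub_distrib,
    sum_eq_add_of_mem i (i + 1) (mem_Icc.2 ⟨hi₁, by omega⟩) (mem_Icc.2 ⟨by omega, by omega⟩)
      (by omega) (fun j _ hj => by simp [pullTowardMean, hj.1, hj.2])]
  have h := (strictConcaveOn_gfun hK0).add_lt_add_toward_weighted_mean hPi hPi' hne
    (sub_pos.2 hα) (sub_pos.2 hβ) hθ₀ hθ₁
  simp only [pullTowardMean, epochMean, true_or, or_true, if_true,
    add_tsub_cancel_right]
  linarith

end pullTowardMean

theorem power_changes_only_when_constraint_active_general (K0 : ℝ) (hK0 : 0 < K0)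
    (K : ℕ) (t : ℕ → ℝ) (htmono : ∀ i, i ≤ K → t i < t (i + 1))
    (E : ℕ → ℝ)
    (Pstar : ℕ → ℝ) (hfeas : SFeas K t E Pstar)
    (hopt : ∀ Q : ℕ → ℝ, SFeas K t E Q →
      SThroughput K0 K t Q ≤ SThroughput K0 K t Pstar) :
    ∀ i, 1 ≤ i → i ≤ K → Pstar i ≠ Pstar (i + 1) →
      ∑ j ∈ Finset.Icc 1 i, Pstar j * (t j - t (j - 1)) = ∑ j ∈ Finset.range i, E j := by
  intro i hi₁ hiK hne
  by_contra hinactive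
  have hslack := lt_of_le_of_ne (hfeas.2 i hi₁ (by omega)) hinactive
  obtain ⟨θ, hθ₀, hθ₁, hθ⟩ := exists_pos_le_one_mul_le
    ((epochMean t Pstar i - Pstar i) * (t i - t (i - 1))) (sub_pos.2 hslack)
  have hα : t (i - 1) < t i := by
    simpa [Nat.sub_add_cancel hi₁] using htmono (i - 1) (by omega)
  have hβ := htmono i hiK
  have hQ := hfeas.pullTowardMean hi₁ hiK hα hβ hθ₀.le hθ₁ (by linarith)
  exact (hopt _ hQ).not_gt (SThroughput_lt_pullTowardMean hK0 hi₁ hiK hα hβ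
    (hfeas.1 i hi₁ (by omega)) (hfeas.1 (i + 1) (by omega) (by omega)) hne hθ₀ hθ₁)

/-- Lemma 3 of the paper (with the Corollary after Lemma 2): in an optimal
policy, whenever the power changes between consecutive epochs `i` and `i+1`,
the energy causality constraint is active at `tⁱ`, i.e. all the energy
harvested before epoch `i+1` has been completely consumed by time `tⁱ`. -/
theorem power_changes_only_when_constraint_active (K0 : ℝ) (hK0 : 0 < K0)
    (K : ℕ) (t : ℕ → ℝ) (ht0 : t 0 = 0) (htmono : ∀ i, i ≤ K → t i < t (i + 1))
    (E : ℕ → ℝ) (hE0 : 0 < E 0) (hE : ∀ j, 1 ≤ j → j ≤ K → 0 ≤ E j)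
    (Pstar : ℕ → ℝ) (hfeas : SFeas K t E Pstar)
    (hopt : ∀ Q : ℕ → ℝ, SFeas K t E Q →
      SThroughput K0 K t Q ≤ SThroughput K0 K t Pstar) :
    ∀ i, 1 ≤ i → i ≤ K → Pstar i ≠ Pstar (i + 1) →
      ∑ j ∈ Finset.Icc 1 i, Pstar j * (t j - t (j - 1)) = ∑ j ∈ Finset.range i, E j :=
  power_changes_only_when_constraint_active_general K0 hK0 K t htmono E Pstar hfeas hopt
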